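/- arXiv:2102.00963 — 2 statements merged into one kernel-verified Lean document; each statement's English description precedes it below -/
import Mathlib

section
/- Fix an integer d ≥ 3 and z ∈ ℂ⁺. Let 𝒢 be a finite tree with all vertex degrees at most d and a distinguished root o with deg_𝒢(o) ≤ d − 1, equipped with the deficit function g(v) = 1 if v = o and g(v) = 0 otherwise. Then the Green's function of the extension of 𝒢 with weight m_sc(z) satisfies G_{oi}(Ext(𝒢, m_sc(z)), z) = m_sc(z)·(−m_sc(z)/√(d−1))^{dist_𝒢(o,i)} for every vertex i. In particular, Y_k(m_sc(z), z) = m_sc(z) for every integer k ≥ 1. -/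
/-!
Write `m = m_sc(z)`, `s = √(d-1)` and `M` for the matrix of the extension. The vector
`v j = m (-m/s)^dist(o,j)` solves `M v = e_o`: at a vertex `i ≠ o` of degree `D` with one
parent and `D - 1` children the row of `M v` is a multiple of
`1 + (D - 1) m²/(d-1) + z m + (d - D) m²/(d-1) = m² + z m + 1 = 0`, and at the root the
deficit term `(d - 1 - D)/(d - 1) · m` makes the row equal to `-m² - z m = 1`. The matrix `M`
is symmetric and `Im ⟨x, M x⟩ < 0` for `x ≠ 0`, so `M` is invertible and
`G_{oi} = G_{io} = (M⁻¹ e_o)_i = v_i`. A truncated `(d-1)`-ary tree satisfies the degree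
constraints, and `dist(o,o) = 0` gives `Y_k = m`.
-/

open scoped Classical

noncomputable section

namespace Paper

/-- The degree of a vertex `v` in `G`. -/
def deg {V : Type} (G : SimpleGraph V) (v : V) : ℕ :=
  Nat.card {u : V // G.Adj v u}

/-- `G` is a `d`-regular graph. -/
def IsRegular {V : Type} (d : ℕ) (G : SimpleGraph V) : Prop :=
  ∀ v, deg G v = d

/-- The excess of a finite graph: #edges - #vertices + #components. -/
def excess {V : Type} (G : SimpleGraph V) : ℤ :=
  (Nat.card G.edgeSet : ℤ) - (Nat.card V : ℤ) + (Nat.card G.ConnectedComponent : ℤ)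

/-- The set of vertices at graph distance at most `R` from the set `S`. -/
def ball {V : Type} (G : SimpleGraph V) (S : Set V) (R : ℝ) : Set V :=
  {v | ∃ u ∈ S, ∃ w : G.Walk u v, (w.length : ℝ) ≤ R}

/-- There is a path between `u` and `v` of length at most `R`. -/
def distLE {V : Type} (G : SimpleGraph V) (u v : V) (R : ℝ) : Prop :=
  ∃ w : G.Walk u v, (w.length : ℝ) ≤ R

/-- The normalized adjacency matrix `A/√(d-1)`, over `ℂ`. -/
def normAdj {V : Type} (d : ℕ) (G : SimpleGraph V) : Matrix V V ℂ :=
  Matrix.of fun i j => if G.Adj i j then ((Real.sqrt ((d : ℝ) - 1) : ℂ))⁻¹ else 0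

/-- The normalized adjacency matrix `A/√(d-1)`, over `ℝ`. -/
def normAdjR {V : Type} (d : ℕ) (G : SimpleGraph V) : Matrix V V ℝ :=
  Matrix.of fun i j => if G.Adj i j then (Real.sqrt ((d : ℝ) - 1))⁻¹ else 0

/-- The Green's function `(H - z)⁻¹`. -/
def green {V : Type} [Fintype V] [DecidableEq V] (d : ℕ) (G : SimpleGraph V) (z : ℂ) :
    Matrix V V ℂ :=
  (normAdj d G - z • (1 : Matrix V V ℂ))⁻¹

/-- The Stieltjes transform `m_N(z) = Tr G(z)/N`. -/
def mN {V : Type} [Fintype V] [DecidableEq V] (d : ℕ) (G : SimpleGraph V) (z : ℂ) : ℂ :=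
  (Nat.card V : ℂ)⁻¹ * Matrix.trace (green d G z)

/-- `m_sc(z)`: the root of `m² + zm + 1 = 0` with positive imaginary part. -/
def mSC (z : ℂ) : ℂ :=
  if h : ∃ m : ℂ, m ^ 2 + z * m + 1 = 0 ∧ 0 < m.im then h.choose else 0

/-- `m_d(z) = (-z - d m_sc(z)/(d-1))⁻¹`. -/
def mD (d : ℕ) (z : ℂ) : ℂ :=
  (-z - (d : ℂ) * mSC z / ((d : ℂ) - 1))⁻¹

/-- `κ(z) = min(|Re z - 2|, |Re z + 2|)`. -/
def kappa (z : ℂ) : ℝ :=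
  min |z.re - 2| |z.re + 2|

/-- The matrix `H - z - Σ_v ((d - g v - deg v)/(d-1)) Δ e_vv` defining the
extension of `(G, g)` with weight `Δ`. -/
def extMatrix {V : Type} [Fintype V] [DecidableEq V] (d : ℕ) (G : SimpleGraph V)
    (g : V → ℕ) (Δ z : ℂ) : Matrix V V ℂ :=
  normAdj d G - z • (1 : Matrix V V ℂ) -
    Matrix.diagonal fun v => (((d : ℂ) - (g v : ℂ) - (deg G v : ℂ)) / ((d : ℂ) - 1)) * Δ

/-- The Green's function of the extension of `(G, g)` with weight `Δ`. -/
def extGreen {V : Type} [Fintype V] [DecidableEq V] (d : ℕ) (G : SimpleGraph V)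
    (g : V → ℕ) (Δ z : ℂ) : Matrix V V ℂ :=
  (extMatrix d G g Δ z)⁻¹

/-- Entry `(i,j)` of the Green's function of the extension with weight `Δ` of the
ball `B_R(S, G)`, the ball carrying the deficit function inherited from the ambient
deficit function `g0`. -/
def ballGreen {V : Type} [Fintype V] [DecidableEq V] (d : ℕ) (G : SimpleGraph V)
    (g0 : V → ℕ) (S : Set V) (R : ℝ) (Δ z : ℂ) (i j : V) : ℂ :=
  if h : i ∈ ball G S R ∧ j ∈ ball G S R then
    extGreen d (G.induce (ball G S R)) (fun v => g0 v.val) Δ z ⟨i, h.1⟩ ⟨j, h.2⟩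
  else 0

/-- The quantity `Q(G,z) = (Nd)⁻¹ Σ_{i ∼ j} G^{(j)}_{ii}(z)`. -/
def Qfun {N : ℕ} (d : ℕ) (G : SimpleGraph (Fin N)) (z : ℂ) : ℂ :=
  ((N : ℂ) * (d : ℂ))⁻¹ *
    ∑ j : Fin N, ∑ i : Fin N,
      if h : G.Adj i j then
        green d (G.induce {k : Fin N | k ≠ j}) z ⟨i, h.ne⟩ ⟨i, h.ne⟩
      else 0

/-- Logarithm in base `d - 1`. -/
def logb (d : ℕ) (x : ℝ) : ℝ :=
  Real.log x / Real.log ((d : ℝ) - 1)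

/-- The radius `ℜ = (c/4) log_{d-1} N`. -/
def RR (N d : ℕ) (c : ℝ) : ℝ :=
  (c / 4) * logb d (N : ℝ)

/-- The radius `r = r₀ log_{d-1} N`. -/
def rr (N d : ℕ) (r₀ : ℝ) : ℝ :=
  r₀ * logb d (N : ℝ)

/-- The set `Ω̄(ω)` of radius-`ℜ` tree-like `d`-regular graphs. -/
def OmegaBar (N d : ℕ) (c : ℝ) (ω : ℕ) : Set (SimpleGraph (Fin N)) :=
  {G | IsRegular d G ∧
    (∀ v : Fin N, excess (G.induce (ball G {v} (RR N d c))) ≤ (ω : ℤ)) ∧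
    (Nat.card {v : Fin N // ¬ (G.induce (ball G {v} (RR N d c))).IsAcyclic} : ℝ) ≤ (N : ℝ) ^ c}

/-- The control parameter `ε₀(z)`. -/
def eps0 (N d : ℕ) (a r : ℝ) (z : ℂ) : ℝ :=
  Real.log (N : ℝ) ^ (8 * a) *
    (((d : ℝ) - 1) ^ (-r) + Real.sqrt ((mD d z).im / ((N : ℝ) * z.im)) +
      ((N : ℝ) * z.im) ^ (-(2 / 3 : ℝ)))

/-- The control parameter `ε(z)`. -/
def eps (N d : ℕ) (a r : ℝ) (z : ℂ) : ℝ :=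
  if eps0 N d a r z ≤ (kappa z + z.im) / Real.log (N : ℝ) then eps0 N d a r z
  else Real.log (N : ℝ) ^ 4 * eps0 N d a r z

/-- The set `Ω(z)` of spectrally regular graphs. -/
def OmegaSet (N d : ℕ) (c a r₀ : ℝ) (ω : ℕ) (z : ℂ) : Set (SimpleGraph (Fin N)) :=
  {G | G ∈ OmegaBar N d c ω ∧
    ‖Qfun d G z - mSC z‖ ≤
      eps N d a (rr N d r₀) z / Real.sqrt (kappa z + z.im + eps N d a (rr N d r₀) z) ∧
    ∀ i j : Fin N,
      ‖green d G z i j -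
          ballGreen d G (fun v => d - deg G v) {i, j} (rr N d r₀) (Qfun d G z) z i j‖ ≤
        eps N d a (rr N d r₀) z}

/-- The set `Ω⁻(z)`. -/
def OmegaMinus (N d : ℕ) (c a r₀ : ℝ) (ω : ℕ) (z : ℂ) : Set (SimpleGraph (Fin N)) :=
  {G | G ∈ OmegaBar N d c ω ∧
    ‖Qfun d G z - mSC z‖ ≤
      eps N d a (rr N d r₀) z / (2 * Real.sqrt (kappa z + z.im + eps N d a (rr N d r₀) z)) ∧
    ∀ i j : Fin N,
      ‖green d G z i j -
          ballGreen d G (fun v => d - deg G v) {i, j} (rr N d r₀) (Qfun d G z) z i j‖ ≤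
        eps N d a (rr N d r₀) z / 2}

/-- `(T, o)` is a depth-`k` truncated `(d-1)`-ary tree with root `o`. -/
def IsTruncAry (d k : ℕ) {V : Type} (T : SimpleGraph V) (o : V) : Prop :=
  T.IsTree ∧ (∀ v, T.dist o v ≤ k) ∧ deg T o = d - 1 ∧
    ∀ v, v ≠ o → T.dist o v < k → deg T v = d

/-- `(T, o)` is a depth-`k` truncated `d`-regular tree with root `o`. -/
def IsTruncReg (d k : ℕ) {V : Type} (T : SimpleGraph V) (o : V) : Prop :=
  T.IsTree ∧ (∀ v, T.dist o v ≤ k) ∧ ∀ v, T.dist o v < k → deg T v = d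

/-- The Kesten–McKay density. -/
def rhoD (d : ℕ) (x : ℝ) : ℝ :=
  (1 + 1 / ((d : ℝ) - 1) - x ^ 2 / (d : ℝ))⁻¹ * Real.sqrt (max (4 - x ^ 2) 0) / (2 * Real.pi)

/-- The diameter of a finite graph. -/
def gDiam {V : Type} [Fintype V] (T : SimpleGraph V) : ℕ :=
  Finset.univ.sup fun p : V × V => T.dist p.1 p.2

/-- The set of boundary edges of `s`, oriented from inside to outside. -/
def bndSet {V : Type} (G : SimpleGraph V) (s : Set V) : Set (V × V) :=
  {p | G.Adj p.1 p.2 ∧ p.1 ∈ s ∧ p.2 ∉ s}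

/-- The vertex set of the connected component of `u` in the subgraph induced on `s`. -/
def comp {V : Type} (G : SimpleGraph V) (s : Set V) (u : V) : Set V :=
  {w | ∃ (hu : u ∈ s) (hw : w ∈ s), (G.induce s).Reachable ⟨u, hu⟩ ⟨w, hw⟩}

/-- The number of neighbors of `v` inside `s`. -/
def degIn {V : Type} (G : SimpleGraph V) (s : Set V) (v : V) : ℕ :=
  Nat.card {w : V // w ∈ s ∧ G.Adj v w}

/-- The deterministic correction `δ_Q(z)`. -/
def deltaQ (N d l : ℕ) (z : ℂ) : ℂ :=
  (((d : ℂ) - 1) ^ (l + 1) - 1) * mSC z ^ (2 * l + 2) *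
    (1 + mSC z / (Real.sqrt ((d : ℝ) - 1) : ℂ)) ^ 2 *
    ((N : ℂ) * ((d : ℂ) / (Real.sqrt ((d : ℝ) - 1) : ℂ) - z))⁻¹

lemma mSC_spec {z : ℂ} (hz : 0 < z.im) : mSC z ^ 2 + z * mSC z + 1 = 0 ∧ 0 < (mSC z).im := by
  suffices h : ∃ m : ℂ, m ^ 2 + z * m + 1 = 0 ∧ 0 < m.im by
    rw [mSC, dif_pos h]
    exact h.choose_spec
  obtain ⟨w, hw⟩ := IsAlgClosed.exists_pow_nat_eq (z ^ 2 - 4) two_pos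
  set m := (-z + w) / 2
  have hm : m ^ 2 + z * m + 1 = 0 := by linear_combination hw / 4
  have hm0 : m ≠ 0 := by rintro h; simp [h] at hm
  have him : m.im ≠ 0 := by
    intro h
    have hre : z.im * m.re = 0 := by simpa [pow_two, h] using congrArg Complex.im hm
    exact hm0 (Complex.ext ((mul_eq_zero.mp hre).resolve_left hz.ne') h)
  rcases him.lt_or_gt with hneg | hpos
  · -- the product of the two roots is `1`, so the other root is `m⁻¹`
    refine ⟨m⁻¹, ?_, ?_⟩
    · field_simp
      linear_combination hm
    · rw [Complex.inv_im]
      exact div_pos (neg_pos.mpr hneg) (Complex.normSq_pos.mpr hm0)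
  · exact ⟨m, hm, hpos⟩

lemma deg_eq_degree {V : Type} [Fintype V] (G : SimpleGraph V) (v : V) :
    deg G v = G.degree v := by
  rw [deg, ← SimpleGraph.card_neighborSet_eq_degree, Nat.card_eq_fintype_card]
  rfl

end Paper

namespace SimpleGraph

variable {V : Type*} {G : SimpleGraph V} {o i p u : V}

lemma Connected.exists_adj_dist_add_one_eq (hG : G.Connected) (hi : i ≠ o) :
    ∃ p, G.Adj i p ∧ G.dist o p + 1 = G.dist o i := by
  obtain ⟨w, hw⟩ := hG.exists_walk_length_eq_dist i o
  cases w with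
  | nil => exact absurd rfl hi
  | @cons _ p _ hadj rest =>
    refine ⟨p, hadj, ?_⟩
    have hle := dist_le rest
    have htri := hG.dist_triangle (u := i) (v := p) (w := o)
    rw [dist_eq_one_iff_adj.mpr hadj] at htri
    rw [Walk.length_cons] at hw
    rw [dist_comm, dist_comm (u := o)]
    omega

lemma IsTree.eq_of_adj_of_dist_add_one_eq (hG : G.IsTree) (hp : G.Adj i p) (hu : G.Adj i u)
    (hdp : G.dist o p + 1 = G.dist o i) (hdu : G.dist o u + 1 = G.dist o i) : u = p := by
  classical
  obtain ⟨q, hq, -⟩ := hG.connected.exists_path_of_dist o i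
  -- a neighbour of `i` closer to `o` lies on the path from `o` to `i`, so is its penultimate vertex
  have key : ∀ w, G.Adj i w → G.dist o w + 1 = G.dist o i → w = q.penultimate := by
    intro w hw hdw
    obtain ⟨r, hr, hrl⟩ := hG.connected.exists_path_of_dist o w
    have hi : i ∉ r.support := fun hir => by
      have := (dist_le (r.takeUntil i hir)).trans (r.length_takeUntil_le_length hir)
      omega
    exact hG.isAcyclic.eq_penultimate_of_adj_end hq hw
      (hG.isAcyclic.mem_support_of_ne_mem_support_of_adj_of_isPath hq hr hw hi)
  rw [key u hu hdu, key p hp hdp]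

lemma IsTree.dist_eq_add_one_of_adj_of_ne (hG : G.IsTree) (hp : G.Adj i p)
    (hdp : G.dist o p + 1 = G.dist o i) (hu : G.Adj i u) (hup : u ≠ p) :
    G.dist o u = G.dist o i + 1 :=
  (hG.dist_eq_dist_add_one_of_adj o hu).resolve_left fun h =>
    hup (hG.eq_of_adj_of_dist_add_one_eq hp hu hdp h.symm)

lemma sum_neighborFinset_comp_dist {R : Type*} [Semiring R] (f : ℕ → R)
    [Fintype (G.neighborSet o)] :
    ∑ j ∈ G.neighborFinset o, f (G.dist o j) = G.degree o * f 1 := by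
  rw [Finset.sum_congr rfl fun j hj => by
      rw [dist_eq_one_iff_adj.mpr ((mem_neighborFinset ..).mp hj)],
    Finset.sum_const, card_neighborFinset_eq_degree, nsmul_eq_mul]

lemma IsTree.sum_neighborFinset_comp_dist_of_ne {R : Type*} [Ring R] (hG : G.IsTree) (f : ℕ → R)
    (hi : i ≠ o) {k : ℕ} (hk : G.dist o i = k + 1) [Fintype (G.neighborSet i)] :
    ∑ j ∈ G.neighborFinset i, f (G.dist o j) = f k + ((G.degree i : R) - 1) * f (k + 2) := by
  obtain ⟨p, hp, hdp⟩ := hG.connected.exists_adj_dist_add_one_eq hi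
  have hpN : p ∈ G.neighborFinset i := (mem_neighborFinset ..).mpr hp
  have hchild : ∀ j ∈ (G.neighborFinset i).erase p, f (G.dist o j) = f (k + 2) := by
    intro j hj
    obtain ⟨hjp, hj⟩ := Finset.mem_erase.mp hj
    rw [hG.dist_eq_add_one_of_adj_of_ne hp hdp ((mem_neighborFinset ..).mp hj) hjp, hk]
  rw [← Finset.add_sum_erase _ _ hpN, Finset.sum_congr rfl hchild, Finset.sum_const,
    Finset.card_erase_of_mem hpN, card_neighborFinset_eq_degree, nsmul_eq_mul,
    Nat.cast_sub (G.degree_pos_iff_exists_adj i |>.mpr ⟨p, hp⟩), Nat.cast_one,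
    show G.dist o p = k by omega]

end SimpleGraph

open Matrix

lemma Matrix.isUnit_det_sub_diagonal_of_isHermitian {n : Type*} [Fintype n] [DecidableEq n]
    {H : Matrix n n ℂ} (hH : H.IsHermitian) {w : n → ℂ} (hw : ∀ i, 0 < (w i).im) :
    IsUnit (H - diagonal w).det := by
  rw [isUnit_iff_ne_zero]
  intro hdet
  obtain ⟨x, hx0, hx⟩ := exists_mulVec_eq_zero_iff.mpr hdet
  obtain ⟨i, hi⟩ := Function.ne_iff.mp hx0
  have hform : (star x ⬝ᵥ (H - diagonal w) *ᵥ x).im =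
      -∑ j, (w j).im * Complex.normSq (x j) := by
    rw [sub_mulVec, dotProduct_sub, Complex.sub_im,
      show (star x ⬝ᵥ H *ᵥ x).im = 0 from hH.im_star_dotProduct_mulVec_self x, zero_sub,
      dotProduct, Complex.im_sum]
    congr 1
    refine Finset.sum_congr rfl fun j _ => ?_
    simp only [mulVec_diagonal, Pi.star_apply, Complex.star_def, Complex.mul_im,
      Complex.mul_re, Complex.conj_re, Complex.conj_im, Complex.normSq_apply]
    ring
  have hpos : 0 < ∑ j, (w j).im * Complex.normSq (x j) :=
    Finset.sum_pos' (fun j _ => mul_nonneg (hw j).le (Complex.normSq_nonneg _))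
      ⟨i, Finset.mem_univ i, mul_pos (hw i) (Complex.normSq_pos.mpr hi)⟩
  rw [hx, dotProduct_zero, Complex.zero_im] at hform
  linarith

namespace Paper

section

variable {V : Type} {d : ℕ} {G : SimpleGraph V}

lemma normAdj_isHermitian : (normAdj d G).IsHermitian :=
  IsHermitian.ext fun i j => by
    simp only [normAdj, of_apply, G.adj_comm]
    split_ifs <;> simp

lemma normAdj_isSymm : (normAdj d G).IsSymm :=
  IsSymm.ext fun i j => by simp [normAdj, G.adj_comm]

variable [Fintype V] [DecidableEq V] {g : V → ℕ} {Δ z : ℂ}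

lemma extMatrix_eq_sub_diagonal : extMatrix d G g Δ z = normAdj d G -
    diagonal fun v => z + (((d : ℂ) - (g v : ℂ) - (deg G v : ℂ)) / ((d : ℂ) - 1)) * Δ := by
  rw [extMatrix, smul_one_eq_diagonal, sub_sub, diagonal_add]

lemma extMatrix_isSymm : (extMatrix d G g Δ z).IsSymm := by
  rw [extMatrix_eq_sub_diagonal]
  exact normAdj_isSymm.sub (isSymm_diagonal _)

lemma isUnit_det_extMatrix (hd : 2 ≤ d) (hg : ∀ v, g v + deg G v ≤ d) (hΔ : 0 ≤ Δ.im)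
    (hz : 0 < z.im) : IsUnit (extMatrix d G g Δ z).det := by
  rw [extMatrix_eq_sub_diagonal]
  refine isUnit_det_sub_diagonal_of_isHermitian normAdj_isHermitian fun v => ?_
  have hcoef : ((d : ℂ) - (g v : ℂ) - (deg G v : ℂ)) / ((d : ℂ) - 1) =
      (((d : ℝ) - g v - deg G v) / ((d : ℝ) - 1) : ℝ) := by
    push_cast
    ring
  have hd' : (2 : ℝ) ≤ d := by exact_mod_cast hd
  have hg' : (g v : ℝ) + deg G v ≤ d := by exact_mod_cast hg v
  rw [hcoef, Complex.add_im, Complex.im_ofReal_mul]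
  have : 0 ≤ ((d : ℝ) - g v - deg G v) / ((d : ℝ) - 1) :=
    div_nonneg (by linarith) (by linarith)
  positivity

lemma extMatrix_mulVec_apply (x : V → ℂ) (i : V) :
    (extMatrix d G g Δ z *ᵥ x) i =
      ((Real.sqrt ((d : ℝ) - 1) : ℂ))⁻¹ * ∑ j ∈ G.neighborFinset i, x j -
        (z + (((d : ℂ) - (g i : ℂ) - (deg G i : ℂ)) / ((d : ℂ) - 1)) * Δ) * x i := by
  rw [extMatrix_eq_sub_diagonal, sub_mulVec, Pi.sub_apply, mulVec_diagonal]
  congr 1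
  simp only [mulVec, dotProduct, normAdj, of_apply, ite_mul, zero_mul,
    Finset.sum_ite, Finset.sum_const_zero, add_zero, ← Finset.mul_sum,
    SimpleGraph.neighborFinset_eq_filter]

end

section

variable {V : Type} [Fintype V] [DecidableEq V] {d : ℕ}

lemma extMatrix_mulVec_geometric (hd : 2 ≤ d) {T : SimpleGraph V} (hT : T.IsTree) (o : V)
    {m z : ℂ} (hm : m ^ 2 + z * m + 1 = 0) :
    extMatrix d T (fun v => if v = o then 1 else 0) m z *ᵥ
        (fun j => m * (-m / (Real.sqrt ((d : ℝ) - 1) : ℂ)) ^ T.dist o j) = Pi.single o 1 := by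
  funext i
  rw [extMatrix_mulVec_apply, deg_eq_degree]
  set s : ℂ := (Real.sqrt ((d : ℝ) - 1) : ℂ)
  have hd1 : (1 : ℝ) ≤ (d : ℝ) - 1 := by
    have : (2 : ℝ) ≤ d := by exact_mod_cast hd
    linarith
  have hs2 : s ^ 2 = (d : ℂ) - 1 := by
    rw [← Complex.ofReal_pow, Real.sq_sqrt (by linarith)]
    push_cast
    ring
  have hs0 : s ≠ 0 := Complex.ofReal_ne_zero.mpr (Real.sqrt_ne_zero'.mpr (by linarith))
  have hd0 : (d : ℂ) - 1 ≠ 0 := hs2 ▸ pow_ne_zero 2 hs0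
  by_cases hi : i = o
  · subst hi
    have hsum := T.sum_neighborFinset_comp_dist (o := i) fun n => m * (-m / s) ^ n
    rw [hsum, SimpleGraph.dist_self, if_pos rfl, Nat.cast_one, Pi.single_eq_same]
    field_simp
    rw [hs2]
    linear_combination (-((d : ℂ) - 1) ^ 2) * hm
  · obtain ⟨k, hk⟩ : ∃ k, T.dist o i = k + 1 :=
      Nat.exists_eq_succ_of_ne_zero (hT.connected.pos_dist_of_ne (Ne.symm hi)).ne'
    have hsum := hT.sum_neighborFinset_comp_dist_of_ne (fun n => m * (-m / s) ^ n) hi hk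
    rw [hsum, hk, if_neg hi, Nat.cast_zero, Pi.single_eq_of_ne hi]
    have hx2 : (-m / s) ^ (k + 2) = (-m / s) ^ k * (m ^ 2 / ((d : ℂ) - 1)) := by
      rw [pow_add, div_pow (-m) s 2, neg_sq, hs2]
    rw [hx2, pow_succ (-m / s) k]
    generalize (-m / s) ^ k = y
    field_simp
    linear_combination (m * y * ((d : ℂ) - 1)) * hm

lemma extGreen_apply_eq_geometric (hd : 2 ≤ d) {T : SimpleGraph V} (hT : T.IsTree) {o : V}
    (hdeg : ∀ v, deg T v ≤ d) (hroot : deg T o ≤ d - 1) {z : ℂ} (hz : 0 < z.im) (i : V) :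
    extGreen d T (fun v => if v = o then 1 else 0) (mSC z) z o i =
      mSC z * (-(mSC z) / (Real.sqrt ((d : ℝ) - 1) : ℂ)) ^ T.dist o i := by
  obtain ⟨hm, hmim⟩ := mSC_spec hz
  set M := extMatrix d T (fun v => if v = o then 1 else 0) (mSC z) z
  have hdeficit : ∀ v, (if v = o then 1 else 0) + deg T v ≤ d := fun v => by
    split_ifs with hv
    · subst hv; omega
    · simpa using hdeg v
  have hunit : IsUnit M.det := isUnit_det_extMatrix hd hdeficit hmim.le hz
  have hsol : M⁻¹ *ᵥ Pi.single o 1 =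
      fun j => mSC z * (-(mSC z) / (Real.sqrt ((d : ℝ) - 1) : ℂ)) ^ T.dist o j := by
    rw [← extMatrix_mulVec_geometric hd hT o hm, mulVec_mulVec, nonsing_inv_mul _ hunit,
      one_mulVec]
  calc M⁻¹ o i = M⁻¹ i o := (extMatrix_isSymm.inv.apply o i).symm
    _ = _ := by rw [← congrFun hsol i, mulVec_single_one]; rfl

lemma IsTruncAry.deg_le {k : ℕ} {W : Type} [Fintype W] {T : SimpleGraph W} {o : W}
    (h : IsTruncAry d k T o) (hd : 1 ≤ d) (v : W) : deg T v ≤ d := by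
  obtain ⟨hT, hdist, hroot, hinner⟩ := h
  rcases eq_or_ne v o with rfl | hvo
  · omega
  rcases (hdist v).lt_or_eq with hlt | hleaf
  · exact (hinner v hvo hlt).le
  obtain ⟨p, hp, hdp⟩ := hT.connected.exists_adj_dist_add_one_eq hvo
  have hsub : T.neighborFinset v ⊆ {p} := fun u hu => by
    by_contra hup
    have := hT.dist_eq_add_one_of_adj_of_ne hp hdp ((T.mem_neighborFinset ..).mp hu)
      (Finset.notMem_singleton.mp hup)
    have := hdist u
    omega
  rw [deg_eq_degree, ← T.card_neighborFinset_eq_degree]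
  exact (Finset.card_le_card hsub).trans (by simpa using hd)

end

/-- Green's function of the extension of a rooted finite tree (deficit `1`
at the root) with weight `m_sc(z)`: the explicit formula
`G_{oi} = m_sc(z) (-m_sc(z)/√(d-1))^{dist(o,i)}`; in particular `Y_k(m_sc(z),z) = m_sc(z)`. -/
theorem statement11 (d : ℕ) (hd : 3 ≤ d) {V : Type} [Fintype V] [DecidableEq V]
    (T : SimpleGraph V) (o : V) (hT : T.IsTree) (hdeg : ∀ v, deg T v ≤ d)
    (hroot : deg T o ≤ d - 1) (z : ℂ) (hz : 0 < z.im) :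
    (∀ i : V,
        extGreen d T (fun v => if v = o then 1 else 0) (mSC z) z o i =
          mSC z * (-(mSC z) / (Real.sqrt ((d : ℝ) - 1) : ℂ)) ^ T.dist o i) ∧
      ∀ k : ℕ, 1 ≤ k →
        ∀ (W : Type) [Fintype W] [DecidableEq W] (T' : SimpleGraph W) (o' : W),
          IsTruncAry d k T' o' →
            extGreen d T' (fun v => if v = o' then 1 else 0) (mSC z) z o' o' = mSC z := by
  refine ⟨extGreen_apply_eq_geometric (by omega) hT hdeg hroot hz,
    fun _ _ W _ _ T' o' hT' => ?_⟩
  have := extGreen_apply_eq_geometric (by omega) hT'.1 (hT'.deg_le (by omega)) hT'.2.2.1.le hz o'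
  rwa [SimpleGraph.dist_self, pow_zero, mul_one] at this

end Paper
end
end

section
/- Under the setup in the context, assume that the ball B = B_R(o,𝒢) has excess at most ω, and let 𝒜 be the annulus obtained from B by deleting the vertices of 𝕋, equipped with the deficit function g(v) = deg_B(v) − deg_𝒜(v). Then every connected component K of 𝒜 satisfies Σ_{v ∈ K} g(v) ≥ 1 and Σ_{v ∈ K} g(v) + excess(K) ≤ ω + 1. -/
open scoped Classical

noncomputable section

namespace Paper

/-!
For `v` in a component `K` of the annulus `B \ T`, every neighbour of `v` in the annulus lies
in `K`, so the deficit `g(v)` is the number of neighbours of `v` in `B \ K`, and `∑_K g` is the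
number of edges between `K` and `B \ K`. Since the ball `B` is connected, `K` is joined to the
inner ball `T` by an edge, so this number is positive. The set `B \ K` is connected: it is the
connected set `T` together with the other components of the annulus, each joined to `T` by an
edge. Hence `B \ K` has at least `|B \ K| - 1` edges, and splitting the edges of `B` into
those inside `K`, inside `B \ K` and between them gives
`excess B ≥ excess K + ∑_K g - 1`.
-/

open SimpleGraph

variable {V : Type} {G : SimpleGraph V}

section Ball

lemma ball_mono {S : Set V} {r r' : ℝ} (h : r ≤ r') : ball G S r ⊆ ball G S r' := by
  rintro v ⟨u, hu, w, hw⟩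
  exact ⟨u, hu, w, hw.trans h⟩

lemma mem_ball_singleton_self (o : V) {r : ℝ} (hr : 0 ≤ r) : o ∈ ball G {o} r :=
  ⟨o, rfl, .nil, by simpa using hr⟩

lemma exists_walk_support_subset_ball {o v : V} {r : ℝ} (hv : v ∈ ball G {o} r) :
    ∃ w : G.Walk o v, ∀ c ∈ w.support, c ∈ ball G {o} r := by
  obtain ⟨o', ho', w, hw⟩ := hv
  obtain rfl : o' = o := ho'
  exact ⟨w, fun c hc => ⟨o', rfl, w.takeUntil c hc,
    le_trans (by exact_mod_cast w.length_takeUntil_le_length hc) hw⟩⟩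

lemma connected_induce_ball (o : V) {r : ℝ} (hr : 0 ≤ r) :
    (G.induce (ball G {o} r)).Connected := by
  refine (connected_iff_exists_forall_reachable _).mpr
    ⟨⟨o, mem_ball_singleton_self o hr⟩, fun ⟨v, hv⟩ => ?_⟩
  obtain ⟨w, hw⟩ := exists_walk_support_subset_ball hv
  exact ⟨w.induce _ hw⟩

end Ball

section Comp

variable {s : Set V} {u v w : V}

lemma comp_subset : comp G s u ⊆ s := fun _ ⟨_, hw, _⟩ => hw

lemma mem_comp_self (hu : u ∈ s) : u ∈ comp G s u := ⟨hu, hu, .refl _⟩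

lemma mem_comp_of_adj (hv : v ∈ comp G s u) (hw : w ∈ s) (hvw : G.Adj v w) :
    w ∈ comp G s u := by
  obtain ⟨hu, hv, r⟩ := hv
  exact ⟨hu, hw, r.trans (Adj.reachable (induce_adj.mpr hvw))⟩

lemma disjoint_comp (hv : v ∉ comp G s u) : Disjoint (comp G s v) (comp G s u) := by
  refine Set.disjoint_left.mpr fun x ⟨hv', hx, rvx⟩ ⟨hu, _, rux⟩ => hv ⟨hu, hv', ?_⟩
  exact rux.trans rvx.symm

lemma connected_induce_comp (hu : u ∈ s) : (G.induce (comp G s u)).Connected := by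
  refine (connected_iff_exists_forall_reachable _).mpr ⟨⟨u, mem_comp_self hu⟩, ?_⟩
  rintro ⟨v, hu', hv, ⟨p⟩⟩
  let q := p.map (Embedding.induce s).toHom
  have hq : ∀ c ∈ q.support, c ∈ comp G s u := by
    intro c hc
    simp only [q, Walk.support_map, List.mem_map] at hc
    obtain ⟨x, hx, rfl⟩ := hc
    exact ⟨hu', x.2, ⟨p.takeUntil x hx⟩⟩
  exact ⟨q.induce _ hq⟩

lemma exists_mem_comp_diff_adj {B T : Set V} (hB : (G.induce B).Preconnected)
    (hu : u ∈ B \ T) {t : V} (htB : t ∈ B) (htT : t ∈ T) :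
    ∃ x ∈ comp G (B \ T) u, ∃ y ∈ T, G.Adj x y := by
  obtain ⟨p⟩ := hB ⟨u, hu.1⟩ ⟨t, htB⟩
  obtain ⟨d, -, hfst, hsnd⟩ := p.exists_boundary_dart {x | x.1 ∈ comp G (B \ T) u}
    (mem_comp_self hu) (fun ht => (comp_subset ht).2 htT)
  have hadj : G.Adj d.fst d.snd := induce_adj.mp d.adj
  refine ⟨d.fst, hfst, d.snd, ?_, hadj⟩
  by_contra hT
  exact hsnd (mem_comp_of_adj hfst ⟨d.snd.2, hT⟩ hadj)

lemma connected_induce_diff_comp {B T : Set V} (hB : (G.induce B).Preconnected)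
    (hT : (G.induce T).Connected) (hTB : T ⊆ B) :
    (G.induce (B \ comp G (B \ T) u)).Connected := by
  have hTK : T ⊆ B \ comp G (B \ T) u := fun t ht => ⟨hTB ht, fun hK => (comp_subset hK).2 ht⟩
  obtain ⟨t₀, ht₀⟩ := hT.nonempty
  refine induce_connected_of_patches t₀ (hTK ht₀) fun {v} hv => ?_
  by_cases hvT : v ∈ T
  · exact ⟨T, hTK, ht₀, hvT, hT.preconnected _ _⟩
  · have hvA : v ∈ B \ T := ⟨hv.1, hvT⟩
    obtain ⟨x, hx, y, hy, hxy⟩ := exists_mem_comp_diff_adj hB hvA (hTB ht₀.out) ht₀.out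
    refine ⟨comp G (B \ T) v ∪ T, Set.union_subset ?_ hTK, Or.inr ht₀.out,
      Or.inl (mem_comp_self hvA), ?_⟩
    · exact fun c hc => ⟨(comp_subset hc).1, Set.disjoint_left.mp (disjoint_comp hv.2) hc⟩
    · exact (connected_induce_union (connected_induce_comp hvA).preconnected hT.preconnected
        hx hy hxy).preconnected _ _

lemma degIn_comp (hv : v ∈ comp G s u) :
    degIn G s v = degIn G (comp G s u) v := by
  unfold degIn
  congr! 3 with w
  exact ⟨fun ⟨hw, hvw⟩ => ⟨mem_comp_of_adj hv hw hvw, hvw⟩,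
    fun ⟨hw, hvw⟩ => ⟨comp_subset hw, hvw⟩⟩

end Comp

section Counting

variable [Finite V]

lemma degIn_eq_finsum (s : Set V) (v : V) :
    degIn G s v = ∑ᶠ w ∈ s, if G.Adj v w then 1 else 0 := by
  have := Fintype.ofFinite V
  rw [degIn, Nat.card_eq_fintype_card, Fintype.card_subtype, finsum_mem_eq_toFinset_sum,
    Finset.sum_boole, Nat.cast_id]
  congr 1
  ext
  simp

lemma degIn_union {s t : Set V} (hst : Disjoint s t) (v : V) :
    degIn G (s ∪ t) v = degIn G s v + degIn G t v := by
  simp only [degIn_eq_finsum]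
  exact finsum_mem_union hst s.toFinite t.toFinite

lemma degIn_eq_add_degIn_diff {s t : Set V} (hst : s ⊆ t) (v : V) :
    degIn G t v = degIn G s v + degIn G (t \ s) v := by
  rw [← degIn_union Set.disjoint_sdiff_right, Set.union_sdiff_cancel hst]

lemma finsum_mem_degIn_comm (s t : Set V) :
    ∑ᶠ v ∈ s, degIn G t v = ∑ᶠ v ∈ t, degIn G s v := by
  simp only [degIn_eq_finsum]
  rw [finsum_mem_comm _ s.toFinite t.toFinite]
  simp only [G.adj_comm]

lemma finsum_mem_degIn_self (s : Set V) :
    ∑ᶠ v ∈ s, degIn G s v = 2 * Nat.card (G.induce s).edgeSet := by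
  have := Fintype.ofFinite V
  rw [← finsum_set_coe_eq_finsum_mem, finsum_eq_sum_of_fintype, Nat.card_eq_fintype_card,
    ← edgeFinset_card, ← sum_degrees_eq_twice_card_edges]
  refine Finset.sum_congr rfl fun x _ => ?_
  rw [← card_neighborSet_eq_degree, degIn, Nat.card_eq_fintype_card]
  exact Fintype.card_congr
    { toFun := fun w => ⟨⟨w.1, w.2.1⟩, w.2.2⟩
      invFun := fun w => ⟨w.1.1, w.1.2, w.2⟩ }

lemma one_le_finsum_mem_degIn {K s : Set V} {v w : V} (hv : v ∈ K) (hw : w ∈ s)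
    (hvw : G.Adj v w) :
    1 ≤ ∑ᶠ x ∈ K, degIn G s x :=
  have : Nonempty {w // w ∈ s ∧ G.Adj v w} := ⟨⟨w, hw, hvw⟩⟩
  calc 1 ≤ degIn G s v := Nat.card_pos
    _ = K.indicator (degIn G s) v := (Set.indicator_of_mem hv _).symm
    _ ≤ ∑ᶠ x, K.indicator (degIn G s) x :=
      single_le_finsum v (Set.toFinite _) fun _ => Nat.zero_le _
    _ = ∑ᶠ x ∈ K, degIn G s x := (finsum_mem_def _ _).symm

lemma card_edgeSet_induce_eq_add {B K : Set V} (hKB : K ⊆ B) :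
    Nat.card (G.induce B).edgeSet = Nat.card (G.induce K).edgeSet +
      Nat.card (G.induce (B \ K)).edgeSet + ∑ᶠ v ∈ K, degIn G (B \ K) v := by
  have hB : ∑ᶠ v ∈ B, degIn G B v =
      ∑ᶠ v ∈ K, degIn G B v + ∑ᶠ v ∈ B \ K, degIn G B v := by
    rw [← finsum_mem_union Set.disjoint_sdiff_right K.toFinite (B \ K).toFinite,
      Set.union_sdiff_cancel hKB]
  have hK : ∑ᶠ v ∈ K, degIn G B v =
      ∑ᶠ v ∈ K, degIn G K v + ∑ᶠ v ∈ K, degIn G (B \ K) v := by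
    rw [← finsum_mem_add_distrib K.toFinite]
    exact finsum_mem_congr rfl fun v _ => degIn_eq_add_degIn_diff hKB v
  have hC : ∑ᶠ v ∈ B \ K, degIn G B v =
      ∑ᶠ v ∈ B \ K, degIn G (B \ K) v + ∑ᶠ v ∈ K, degIn G (B \ K) v := by
    rw [finsum_mem_degIn_comm K, ← finsum_mem_add_distrib (B \ K).toFinite]
    refine finsum_mem_congr rfl fun v _ => ?_
    rw [degIn_eq_add_degIn_diff hKB, add_comm]
  have := finsum_mem_degIn_self (G := G) B
  rw [hB, hK, hC, finsum_mem_degIn_self, finsum_mem_degIn_self] at this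
  omega

end Counting

lemma excess_eq_of_connected {W : Type} {H : SimpleGraph W} (hH : H.Connected) :
    excess H = Nat.card H.edgeSet - Nat.card W + 1 := by
  have := hH.preconnected.subsingleton_connectedComponent
  have : Nonempty H.ConnectedComponent := ⟨H.connectedComponentMk hH.nonempty.some⟩
  rw [excess, Nat.card_unique (α := H.ConnectedComponent), Nat.cast_one]

lemma excess_induce_add_finsum_degIn_le [Finite V] {B K : Set V} (hKB : K ⊆ B)
    (hB : (G.induce B).Connected) (hK : (G.induce K).Connected)
    (hC : (G.induce (B \ K)).Connected) :
    excess (G.induce K) + ∑ᶠ v ∈ K, (degIn G (B \ K) v : ℤ) ≤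
      excess (G.induce B) + 1 := by
  have hcard : Nat.card B = Nat.card (B \ K : Set V) + Nat.card K := by
    simp only [Nat.card_coe_set_eq, Set.ncard_sdiff_add_ncard_of_subset hKB]
  have := hC.card_vert_le_card_edgeSet_add_one
  rw [excess_eq_of_connected hB, excess_eq_of_connected hK, ← Nat.cast_finsum_mem K.toFinite,
    card_edgeSet_induce_eq_add hKB, hcard]
  push_cast
  omega

theorem statement18_general (N : ℕ) (G : SimpleGraph (Fin N)) (o : Fin N) (ℓ : ℕ) (R : ℝ)
    (hR : 2 * (ℓ : ℝ) ≤ R) (ω : ℕ)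
    (hex : excess (G.induce (ball G {o} R)) ≤ (ω : ℤ)) :
    ∀ u : Fin N, u ∈ ball G {o} R \ ball G {o} (ℓ : ℝ) →
      (1 ≤ ∑ᶠ v ∈ comp G (ball G {o} R \ ball G {o} (ℓ : ℝ)) u,
            ((degIn G (ball G {o} R) v : ℤ) -
              (degIn G (ball G {o} R \ ball G {o} (ℓ : ℝ)) v : ℤ))) ∧
      (∑ᶠ v ∈ comp G (ball G {o} R \ ball G {o} (ℓ : ℝ)) u,
            ((degIn G (ball G {o} R) v : ℤ) -
              (degIn G (ball G {o} R \ ball G {o} (ℓ : ℝ)) v : ℤ))) +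
          excess (G.induce (comp G (ball G {o} R \ ball G {o} (ℓ : ℝ)) u)) ≤ (ω : ℤ) + 1 := by
  intro u hu
  set B := ball G {o} R
  set T := ball G {o} (ℓ : ℝ)
  set K := comp G (B \ T) u
  have hℓ : (0 : ℝ) ≤ ℓ := ℓ.cast_nonneg
  have hTB : T ⊆ B := ball_mono (by linarith)
  have hB := connected_induce_ball (G := G) o (hℓ.trans (by linarith))
  have hT := connected_induce_ball (G := G) o hℓ
  have hKB : K ⊆ B := fun v hv => (comp_subset hv).1
  have hdeficit : ∀ v ∈ K, (degIn G B v : ℤ) - degIn G (B \ T) v = degIn G (B \ K) v := by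
    intro v hv
    rw [degIn_eq_add_degIn_diff hKB, degIn_comp hv]
    push_cast
    ring
  rw [finsum_mem_congr rfl hdeficit]
  have hoT : o ∈ T := mem_ball_singleton_self o hℓ
  obtain ⟨x, hx, y, hy, hxy⟩ := exists_mem_comp_diff_adj hB.preconnected hu (hTB hoT) hoT
  refine ⟨?_, ?_⟩
  · rw [← Nat.cast_finsum_mem K.toFinite]
    exact_mod_cast one_le_finsum_mem_degIn (s := B \ K) hx
      ⟨hTB hy, fun h => (comp_subset h).2 hy⟩ hxy
  · linarith [excess_induce_add_finsum_degIn_le hKB hB (connected_induce_comp hu)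
      (connected_induce_diff_comp hB.preconnected hT hTB)]

/-- every connected component of the annulus `B_R(o) \ 𝕋`, carrying the
deficit function `g(v) = deg_B(v) - deg_𝒜(v)`, has total deficit at least `1`, and the
total deficit plus the excess of the component is at most `ω + 1`. -/
theorem statement18 (d : ℕ) (hd : 3 ≤ d) (N : ℕ) (G : SimpleGraph (Fin N))
    (hreg : IsRegular d G) (o : Fin N) (ℓ : ℕ) (hl : 1 ≤ ℓ) (R : ℝ)
    (hR : 2 * (ℓ : ℝ) ≤ R) (ω : ℕ)
    (hex : excess (G.induce (ball G {o} R)) ≤ (ω : ℤ)) :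
    ∀ u : Fin N, u ∈ ball G {o} R \ ball G {o} (ℓ : ℝ) →
      (1 ≤ ∑ᶠ v ∈ comp G (ball G {o} R \ ball G {o} (ℓ : ℝ)) u,
            ((degIn G (ball G {o} R) v : ℤ) -
              (degIn G (ball G {o} R \ ball G {o} (ℓ : ℝ)) v : ℤ))) ∧
      (∑ᶠ v ∈ comp G (ball G {o} R \ ball G {o} (ℓ : ℝ)) u,
            ((degIn G (ball G {o} R) v : ℤ) -
              (degIn G (ball G {o} R \ ball G {o} (ℓ : ℝ)) v : ℤ))) +
          excess (G.induce (comp G (ball G {o} R \ ball G {o} (ℓ : ℝ)) u)) ≤ (ω : ℤ) + 1 :=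
  statement18_general N G o ℓ R hR ω hex

end Paper
end
end
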